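/- The two presentations ⟨y, u ∣ yuy = uyu, (yuy)^4 = 1⟩ and ⟨x, z ∣ x^4 = 1, x^2 = z^3⟩ define isomorphic groups, via the map sending z ↦ yu and x ↦ (yuy)^{-1}. -/

import Mathlib

/-- Generators of the first presentation: `y` and `u`. -/
inductive GenYU | y | u
deriving DecidableEq

/-- Generators of the second presentation: `x` and `z`. -/
inductive GenXZ | x | z
deriving DecidableEq

open FreeGroup in
/-- Relators `yuy (uyu)⁻¹` and `(yuy)^4`. -/
def RelsYU : Set (FreeGroup GenYU) :=
  { of GenYU.y * of GenYU.u * of GenYU.y * (of GenYU.u * of GenYU.y * of GenYU.u)⁻¹,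
    (of GenYU.y * of GenYU.u * of GenYU.y) ^ 4 }

open FreeGroup in
/-- Relators `x^4` and `x^2 (z^3)⁻¹`. -/
def RelsXZ : Set (FreeGroup GenXZ) :=
  { of GenXZ.x ^ 4, of GenXZ.x ^ 2 * (of GenXZ.z ^ 3)⁻¹ }

/-!
With `x = (yuy)⁻¹` and `z = yu`, the braid relation gives `(yuy)² = (yuy)(uyu) = (yu)³`, and
`(yuy)⁴ = 1` makes `x² = (yuy)²`; hence `x² = z³`. Conversely `y = z⁻¹x⁻¹` and `u = xz²`
satisfy `yuy = x⁻¹` identically and `uyu = xz³ = x³ = x⁻¹`. The two substitutions are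
mutually inverse already in the free groups, so the induced homomorphisms are inverse
isomorphisms.
-/

section GroupLevel

variable {G : Type*} [Group G]

theorem braid_sq_eq_mul_pow_three {y u : G} (hbraid : y * u * y = u * y * u) :
    (y * u * y) ^ 2 = (y * u) ^ 3 :=
  calc (y * u * y) ^ 2 = y * u * y * (u * y * u) := by rw [sq, hbraid]
    _ = (y * u) ^ 3 := by simp only [pow_succ, pow_zero, one_mul, mul_assoc]

theorem inv_sq_eq_sq_of_pow_four_eq_one {g : G} (h : g ^ 4 = 1) : g⁻¹ ^ 2 = g ^ 2 := by
  rw [inv_pow, inv_eq_iff_mul_eq_one, ← pow_add]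
  exact h

theorem inv_mul_inv_mul_mul_sq_mul_inv_mul_inv (x z : G) :
    z⁻¹ * x⁻¹ * (x * z ^ 2) * (z⁻¹ * x⁻¹) = x⁻¹ := by
  group

theorem mul_sq_mul_inv_mul_inv_mul_mul_sq {x z : G} (hx : x ^ 4 = 1) (hxz : x ^ 2 = z ^ 3) :
    x * z ^ 2 * (z⁻¹ * x⁻¹) * (x * z ^ 2) = x⁻¹ := by
  calc x * z ^ 2 * (z⁻¹ * x⁻¹) * (x * z ^ 2) = x * z ^ 3 := by group
    _ = x⁻¹ := by rw [← hxz, ← pow_succ', eq_inv_iff_mul_eq_one, ← pow_succ, hx]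

def liftYU (y₀ u₀ : G) (hbraid : y₀ * u₀ * y₀ = u₀ * y₀ * u₀) (hpow : (y₀ * u₀ * y₀) ^ 4 = 1) :
    PresentedGroup RelsYU →* G :=
  PresentedGroup.toGroup (f := fun | .y => y₀ | .u => u₀) <| by
    rintro r (rfl | rfl) <;> simp only [map_mul, map_inv, map_pow, FreeGroup.lift_apply_of]
    · exact mul_inv_eq_one.mpr hbraid
    · exact hpow

def liftXZ (x₀ z₀ : G) (hpow : x₀ ^ 4 = 1) (hsq : x₀ ^ 2 = z₀ ^ 3) :
    PresentedGroup RelsXZ →* G :=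
  PresentedGroup.toGroup (f := fun | .x => x₀ | .z => z₀) <| by
    rintro r (rfl | rfl) <;> simp only [map_mul, map_inv, map_pow, FreeGroup.lift_apply_of]
    · exact hpow
    · exact mul_inv_eq_one.mpr hsq

variable {y₀ u₀ x₀ z₀ : G}

@[simp]
theorem liftYU_of_y (hbraid) (hpow) : liftYU y₀ u₀ hbraid hpow (.of .y) = y₀ :=
  PresentedGroup.toGroup.of _

@[simp]
theorem liftYU_of_u (hbraid) (hpow) : liftYU y₀ u₀ hbraid hpow (.of .u) = u₀ :=
  PresentedGroup.toGroup.of _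

@[simp]
theorem liftXZ_of_x (hpow) (hsq) : liftXZ x₀ z₀ hpow hsq (.of .x) = x₀ :=
  PresentedGroup.toGroup.of _

@[simp]
theorem liftXZ_of_z (hpow) (hsq) : liftXZ x₀ z₀ hpow hsq (.of .z) = z₀ :=
  PresentedGroup.toGroup.of _

end GroupLevel

section PresentedGroups

local notation "Y" => (PresentedGroup.of GenYU.y : PresentedGroup RelsYU)
local notation "U" => (PresentedGroup.of GenYU.u : PresentedGroup RelsYU)
local notation "X" => (PresentedGroup.of GenXZ.x : PresentedGroup RelsXZ)
local notation "Z" => (PresentedGroup.of GenXZ.z : PresentedGroup RelsXZ)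

theorem yu_braid : Y * U * Y = U * Y * U := by
  have h := PresentedGroup.mk_eq_mk_of_mul_inv_mem (rels := RelsYU) (Or.inl rfl)
  simp only [map_mul] at h
  exact h

theorem yuy_pow_four : (Y * U * Y) ^ 4 = 1 := by
  have h := PresentedGroup.one_of_mem (rels := RelsYU) (Or.inr rfl)
  simp only [map_mul, map_pow] at h
  exact h

theorem x_pow_four : X ^ 4 = 1 := by
  have h := PresentedGroup.one_of_mem (rels := RelsXZ) (Or.inl rfl)
  simp only [map_pow] at h
  exact h

theorem x_sq_eq_z_pow_three : X ^ 2 = Z ^ 3 := by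
  have h := PresentedGroup.mk_eq_mk_of_mul_inv_mem (rels := RelsXZ) (Or.inr rfl)
  simp only [map_pow] at h
  exact h

def xzToYU : PresentedGroup RelsXZ →* PresentedGroup RelsYU :=
  liftXZ (Y * U * Y)⁻¹ (Y * U) (by rw [inv_pow, yuy_pow_four, inv_one])
    (by rw [inv_sq_eq_sq_of_pow_four_eq_one yuy_pow_four, braid_sq_eq_mul_pow_three yu_braid])

def yuToXZ : PresentedGroup RelsYU →* PresentedGroup RelsXZ :=
  liftYU (Z⁻¹ * X⁻¹) (X * Z ^ 2)
    (by rw [inv_mul_inv_mul_mul_sq_mul_inv_mul_inv,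
      mul_sq_mul_inv_mul_inv_mul_mul_sq x_pow_four x_sq_eq_z_pow_three])
    (by rw [inv_mul_inv_mul_mul_sq_mul_inv_mul_inv, inv_pow, x_pow_four, inv_one])

theorem xzToYU_comp_yuToXZ : xzToYU.comp yuToXZ = MonoidHom.id _ := by
  ext (_ | _) <;> simp [xzToYU, yuToXZ, sq] <;> group

theorem yuToXZ_comp_xzToYU : yuToXZ.comp xzToYU = MonoidHom.id _ := by
  ext (_ | _) <;> simp [xzToYU, yuToXZ] <;> group

end PresentedGroups

/-- The presentations `⟨y,u ∣ yuy = uyu, (yuy)^4 = 1⟩` and `⟨x,z ∣ x^4 = 1, x^2 = z^3⟩`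
define isomorphic groups, via `z ↦ yu` and `x ↦ (yuy)⁻¹`. -/
theorem presentations_isomorphic :
    ∃ φ : PresentedGroup RelsXZ ≃* PresentedGroup RelsYU,
      φ (PresentedGroup.of GenXZ.z) = PresentedGroup.of GenYU.y * PresentedGroup.of GenYU.u ∧
      φ (PresentedGroup.of GenXZ.x) =
        (PresentedGroup.of GenYU.y * PresentedGroup.of GenYU.u * PresentedGroup.of GenYU.y)⁻¹ :=
  ⟨xzToYU.toMulEquiv yuToXZ yuToXZ_comp_xzToYU xzToYU_comp_yuToXZ,
    by simp [xzToYU], by simp [xzToYU]⟩
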